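/- arXiv:math/0606724 — 6 statements merged into one kernel-verified Lean document; each statement's English description precedes it below -/
import Mathlib

section
/- Let A be a unital C*-algebra and x a positive element of A with infinite spectrum. Then there exists a sequence (α_i) of positive elements in the C*-subalgebra generated by x such that ‖α_i‖ = 1 for all i, 0 ≤ α_i ≤ 1, and for every n the partial sum α_1 + ... + α_n ≤ 1. -/
/-!
The spectrum of `x` is an infinite compact subset of `ℂ`, so it has an accumulation point `z₀`.
Choosing spectral points `tₙ` with `|tₙ - z₀|` more than halving at each step makes the balls
`B(tₙ, |tₙ - z₀| / 4)` pairwise disjoint. Urysohn functions `fₙ : ℂ → [0, 1]` supported in these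
balls with `fₙ tₙ = 1` have pointwise partial sums at most `1`, so `αₙ = fₙ(x)` works: the
functional calculus is monotone, and it is isometric, so `‖αₙ‖ = sup_{σ(x)} fₙ = 1`.
-/

open Set Function Metric Filter Topology ComplexOrder

section Metric

variable {X : Type*} [MetricSpace X]

lemma disjoint_ball_of_dist_lt_half {a b x₀ : X} (h : dist b x₀ < dist a x₀ / 2) :
    Disjoint (ball a (dist a x₀ / 4)) (ball b (dist b x₀ / 4)) := by
  refine Set.disjoint_left.2 fun s hsa hsb => ?_
  rw [mem_ball] at hsa hsb
  have hb := dist_nonneg (x := b) (y := x₀)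
  have ha := dist_triangle_left a x₀ s
  have hs := dist_triangle s b x₀
  linarith

lemma AccPt.exists_seq_pairwise_disjoint_ball {x₀ : X} {S : Set X} (h : AccPt x₀ (𝓟 S)) :
    ∃ (t : ℕ → X) (ρ : ℕ → ℝ), (∀ n, t n ∈ S) ∧ (∀ n, 0 < ρ n) ∧
      Pairwise (Disjoint on fun n => ball (t n) (ρ n)) := by
  obtain ⟨t, ht, hdist⟩ := exists_seq_of_forall_finset_exists (fun y => y ∈ S ∧ y ≠ x₀)
    (fun a b => dist b x₀ < dist a x₀ / 2) fun F hF => by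
      have hU : {y | ∀ a ∈ F, dist y x₀ < dist a x₀ / 2} ∈ 𝓝 x₀ :=
        (eventually_all_finset F).2 fun a ha =>
          ball_mem_nhds x₀ (half_pos (dist_pos.2 (hF a ha).2))
      obtain ⟨y, ⟨hyU, hyS⟩, hyx₀⟩ := accPt_iff_nhds.1 h _ hU
      exact ⟨y, ⟨hyS, hyx₀⟩, hyU⟩
  refine ⟨t, fun n => dist (t n) x₀ / 4, fun n => (ht n).1,
    fun n => by have := dist_pos.2 (ht n).2; positivity, ?_⟩
  exact (pairwise_disjoint_on _).2 fun m n hmn => disjoint_ball_of_dist_lt_half (hdist m n hmn)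

lemma exists_continuous_apply_eq_one_support_subset_ball (c : X) {ρ : ℝ} (hρ : 0 < ρ) :
    ∃ f : C(X, ℝ), f c = 1 ∧ (∀ s, f s ∈ Icc 0 1) ∧ support f ⊆ ball c ρ := by
  obtain ⟨f, hf0, hf1, hf01⟩ := exists_continuous_zero_one_of_isClosed
    (isOpen_ball (x := c) (ε := ρ)).isClosed_compl isClosed_singleton
    (disjoint_compl_left_iff_subset.2 (singleton_subset_iff.2 (mem_ball_self hρ)))
  exact ⟨f, hf1 rfl, hf01, fun s hs => not_not.1 fun h => hs (hf0 h)⟩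

lemma AccPt.exists_seq_continuous_pairwise_disjoint_support {x₀ : X} {S : Set X}
    (h : AccPt x₀ (𝓟 S)) :
    ∃ (t : ℕ → X) (f : ℕ → C(X, ℝ)), (∀ n, t n ∈ S) ∧ (∀ n, f n (t n) = 1) ∧
      (∀ n s, f n s ∈ Icc 0 1) ∧ Pairwise (Disjoint on fun n => support (f n)) := by
  obtain ⟨t, ρ, htS, hρ, hdisj⟩ := h.exists_seq_pairwise_disjoint_ball
  choose f hft hf01 hsupp using
    fun n => exists_continuous_apply_eq_one_support_subset_ball (t n) (hρ n)
  exact ⟨t, f, htS, hft, hf01, fun m n hmn => (hdisj hmn).mono (hsupp m) (hsupp n)⟩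

end Metric

lemma Finset.sum_le_of_pairwise_disjoint_support {ι α M : Type*} [AddCommMonoid M]
    [Preorder M] {f : ι → α → M} {c : M} (hc : 0 ≤ c) (hf : ∀ i a, f i a ≤ c)
    (hdisj : Pairwise (Disjoint on fun i => support (f i))) (s : Finset ι) (a : α) :
    ∑ i ∈ s, f i a ≤ c := by
  by_cases h : ∃ i ∈ s, f i a ≠ 0
  · obtain ⟨i, hi, hia⟩ := h
    rw [Finset.sum_eq_single_of_mem i hi fun j _ hji => ?_]
    · exact hf i a
    · by_contra hja
      exact Set.disjoint_left.1 (hdisj hji) hja hia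
  · rw [Finset.sum_eq_zero fun i hi => not_not.1 fun hia => h ⟨i, hi, hia⟩]
    exact hc

section CFC

variable {𝕜 A : Type*} {p : A → Prop} [RCLike 𝕜] [NormedRing A] [StarRing A] [NormedAlgebra 𝕜 A]
  [IsometricContinuousFunctionalCalculus 𝕜 A p]

lemma norm_cfc_eq_one {f : 𝕜 → 𝕜} {a : A} (hf : ∀ z ∈ spectrum 𝕜 a, ‖f z‖ ≤ 1) {z₀ : 𝕜}
    (hz₀ : z₀ ∈ spectrum 𝕜 a) (hfz₀ : ‖f z₀‖ = 1)
    (hf_cont : ContinuousOn f (spectrum 𝕜 a) := by cfc_cont_tac) (ha : p a := by cfc_tac) :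
    ‖cfc f a‖ = 1 :=
  le_antisymm (norm_cfc_le zero_le_one hf) (hfz₀ ▸ norm_apply_le_norm_cfc f a hz₀)

end CFC

/-- If `A` is a unital C*-algebra and `x` is a positive element of `A`
with infinite spectrum, then there is a sequence `α i` of positive elements of the
C*-subalgebra generated by `x` with `‖α i‖ = 1`, `0 ≤ α i ≤ 1`, and all partial sums
`α 0 + ⋯ + α (n-1) ≤ 1`. -/
theorem stmt0 {A : Type} [CStarAlgebra A] [PartialOrder A] [StarOrderedRing A] (x : A) (hx : 0 ≤ x)
    (hspec : (spectrum ℂ x).Infinite) :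
    ∃ α : ℕ → A,
      (∀ i, α i ∈ StarAlgebra.elemental ℂ x) ∧
      (∀ i, ‖α i‖ = 1) ∧
      (∀ i, 0 ≤ α i) ∧
      (∀ i, α i ≤ 1) ∧
      (∀ n : ℕ, ∑ i ∈ Finset.range n, α i ≤ 1) := by
  have : IsStarNormal x := hx.isSelfAdjoint.isStarNormal
  obtain ⟨z₀, -, hz₀⟩ :=
    hspec.exists_accPt_of_subset_isCompact (spectrum.isCompact x) subset_rfl
  obtain ⟨t, f, ht, hft, hf01, hdisj⟩ := hz₀.exists_seq_continuous_pairwise_disjoint_support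
  let g : ℕ → ℂ → ℂ := fun n z => (f n z : ℂ)
  have hg_le : ∀ n z, g n z ≤ 1 := fun n z =>
    (Complex.real_le_real.2 (hf01 n z).2).trans_eq Complex.ofReal_one
  have hg_disj : Pairwise (Disjoint on fun n => support (g n)) := by
    simpa only [g, ← comp_apply (f := Complex.ofReal),
      support_comp_eq Complex.ofReal Complex.ofReal_eq_zero] using hdisj
  refine ⟨fun n => cfc (g n) x, fun n => cfc_mem_elemental _ x, fun n => ?_,
    fun n => cfc_nonneg fun z _ => ?_, fun n => cfc_le_one _ x fun z _ => hg_le n z,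
    fun n => ?_⟩
  · exact norm_cfc_eq_one (fun z _ => by simpa [g, abs_of_nonneg (hf01 n z).1] using (hf01 n z).2)
      (ht n) (by simp [g, hft n])
  · exact Complex.zero_le_real.2 (hf01 n z).1
  · rw [← cfc_sum g x]
    refine cfc_le_one _ x fun z _ => ?_
    rw [Finset.sum_apply]
    exact Finset.sum_le_of_pairwise_disjoint_support zero_le_one hg_le hg_disj _ z
end

section
/- Let A be an irreducible C*-subalgebra of B(H) in which every positive element has finite spectrum. Then every projection p ∈ A whose image has dimension at least 2 can be decomposed as p = p₀ + p₁ where p₀, p₁ ∈ A are nonzero mutually orthogonal projections. -/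
/-!
Compress by `p`: irreducibility gives, for nonzero orthogonal vectors `u, v` in the range of `p`,
some `x ∈ A` with `⟪u, x v⟫ ≠ 0`, and taking real or imaginary parts one may take `x`
self-adjoint. Then `b = p x p` is a self-adjoint element of the corner `pAp` which is not a
multiple of `p`. Shifting `b` by `‖b‖` makes it positive, so `b` has finite spectrum, and its
spectral projections are polynomials in `b`, hence lie in `A`. Those for nonzero eigenvalues are
subprojections of `p`; if all of them were `0` or `p`, the spectral decomposition would make `b`
a multiple of `p`.
-/

open scoped InnerProductSpace ComplexStarModule

section CStarAlgebra

variable {E : Type*} [CStarAlgebra E]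

lemma cfc_mem_adjoin_of_finite_spectrum {b : E} (hb : IsSelfAdjoint b)
    (hfin : (spectrum ℝ b).Finite) (f : ℝ → ℝ) : cfc f b ∈ Algebra.adjoin ℝ {b} := by
  classical
  have hinj : Set.InjOn id (hfin.toFinset : Set ℝ) := Set.injOn_id _
  have : cfc f b = Polynomial.aeval b (Lagrange.interpolate hfin.toFinset id f) := by
    rw [← cfc_polynomial _ b]
    exact cfc_congr fun x hx =>
      (Lagrange.eval_interpolate_at_node f hinj (hfin.mem_toFinset.mpr hx)).symm
  rw [this]
  exact Polynomial.aeval_mem_adjoin_singleton ℝ b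

/-- Only meaningful for finite spectrum: otherwise the indicator need not be continuous on
`spectrum ℝ b` and `cfc` returns `0`. -/
noncomputable def spectralProjection (b : E) (μ : ℝ) : E :=
  cfc (fun x : ℝ => if x = μ then 1 else 0) b

section SpectralProjection

variable {b : E} (hfin : (spectrum ℝ b).Finite)
include hfin

lemma isStarProjection_spectralProjection (μ : ℝ) :
    IsStarProjection (spectralProjection b μ) := by
  refine ⟨?_, cfc_predicate _ _⟩
  rw [IsIdempotentElem, spectralProjection,
    ← cfc_mul _ _ _ (hfin.continuousOn _) (hfin.continuousOn _)]
  exact cfc_congr fun x _ => by split_ifs <;> simp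

lemma spectralProjection_ne_zero (hb : IsSelfAdjoint b) {μ : ℝ} (hμ : μ ∈ spectrum ℝ b) :
    spectralProjection b μ ≠ 0 := by
  rw [spectralProjection, ← cfc_zero ℝ b, Ne,
    cfc_eq_cfc_iff_eqOn (hf := hfin.continuousOn _) (hg := hfin.continuousOn _)]
  exact fun h => by simpa using h hμ

lemma spectralProjection_mul_eq_self (hb : IsSelfAdjoint b) {μ : ℝ} (hμ : μ ≠ 0) {p : E}
    (hbp : b * p = b) :
    spectralProjection b μ * p = spectralProjection b μ := by
  have : spectralProjection b μ = cfc (fun x : ℝ => (μ⁻¹ * if x = μ then 1 else 0) * x) b :=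
    cfc_congr fun x _ => by split_ifs with h <;> simp [h, hμ]
  rw [this, cfc_mul _ _ b (hfin.continuousOn _) (hfin.continuousOn _), cfc_id' ℝ b, mul_assoc,
    hbp]

lemma sum_smul_spectralProjection (hb : IsSelfAdjoint b) :
    ∑ μ ∈ hfin.toFinset, μ • spectralProjection b μ = b := by
  classical
  simp only [spectralProjection, ← cfc_smul _ _ _ (hfin.continuousOn _)]
  rw [← cfc_sum _ _ _ fun _ _ => hfin.continuousOn _]
  conv_rhs => rw [← cfc_id' ℝ b]
  exact cfc_congr fun x hx => by simp [hfin.mem_toFinset.mpr hx]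

lemma exists_proper_subprojection_mem_adjoin (hb : IsSelfAdjoint b) {p : E} (hbp : b * p = b)
    (hne : ∀ r : ℝ, b ≠ r • p) :
    ∃ q ∈ Algebra.adjoin ℝ {b}, IsStarProjection q ∧ q ≠ 0 ∧ q ≠ p ∧ q * p = q := by
  by_contra! h
  suffices ∀ μ ∈ hfin.toFinset, μ • spectralProjection b μ = μ • p by
    refine hne (∑ μ ∈ hfin.toFinset, μ) ?_
    rw [Finset.sum_smul, ← Finset.sum_congr rfl this, sum_smul_spectralProjection hfin hb]
  intro μ hμ
  rcases eq_or_ne μ 0 with rfl | hμ0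
  · simp
  have hμb := hfin.mem_toFinset.mp hμ
  by_contra hμp
  exact h (spectralProjection b μ) (cfc_mem_adjoin_of_finite_spectrum hb hfin _)
    (isStarProjection_spectralProjection hfin μ) (spectralProjection_ne_zero hfin hb hμb)
    (fun he => hμp (by rw [he])) (spectralProjection_mul_eq_self hfin hb hμ0 hbp)

end SpectralProjection

lemma IsSelfAdjoint.finite_spectrum_real [PartialOrder E] [StarOrderedRing E]
    {A : StarSubalgebra ℂ E} (hfin : ∀ a ∈ A, 0 ≤ a → (spectrum ℂ a).Finite) {b : E}
    (hbA : b ∈ A) (hb : IsSelfAdjoint b) : (spectrum ℝ b).Finite := by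
  have hpos : 0 ≤ b + algebraMap ℝ E ‖b‖ :=
    neg_le_iff_add_nonneg.mp hb.neg_algebraMap_norm_le_self
  rw [IsScalarTower.algebraMap_apply ℝ ℂ E] at hpos
  have hC : (spectrum ℂ b).Finite := by
    have := hfin _ (add_mem hbA (A.algebraMap_mem _)) hpos
    rw [← spectrum.add_singleton_eq, Set.add_singleton] at this
    exact this.of_finite_image (add_left_injective _).injOn
  rw [← spectrum.preimage_algebraMap ℂ]
  exact hC.preimage (Complex.ofReal_injective.injOn)

end CStarAlgebra

lemma exists_ne_zero_inner_eq_zero_of_two_le_rank {𝕜 E : Type*} [RCLike 𝕜]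
    [NormedAddCommGroup E] [InnerProductSpace 𝕜 E] {K : Submodule 𝕜 E}
    (hK : 2 ≤ Module.rank 𝕜 K) : ∃ u ∈ K, ∃ v ∈ K, u ≠ 0 ∧ v ≠ 0 ∧ ⟪u, v⟫_𝕜 = 0 := by
  have hK1 : ¬ Module.rank 𝕜 K ≤ 1 := fun h => by
    have := hK.trans h
    norm_num at this
  rw [rank_le_one_iff] at hK1
  push Not at hK1
  obtain ⟨u, hu⟩ := hK1 0
  obtain ⟨w, hw⟩ := hK1 u
  have hu0 : (u : E) ≠ 0 := fun h => hu 0 (Subtype.ext (by simp [h]))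
  have huu : ⟪(u : E), u⟫_𝕜 ≠ 0 := inner_self_ne_zero.mpr hu0
  set c := ⟪(u : E), w⟫_𝕜 / ⟪(u : E), u⟫_𝕜
  refine ⟨u, u.2, w - c • u, K.sub_mem w.2 (K.smul_mem c u.2), hu0, fun h => hw c ?_, ?_⟩
  · exact Subtype.ext (sub_eq_zero.mp h).symm
  · rw [inner_sub_right, inner_smul_right, div_mul_cancel₀ _ huu, sub_self]

section HilbertSpace

variable {H : Type*} [NormedAddCommGroup H] [InnerProductSpace ℂ H]

lemma exists_inner_apply_ne_zero (A : Subalgebra ℂ (H →L[ℂ] H))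
    (hirr : ∀ K : Submodule ℂ H, IsClosed (K : Set H) →
      (∀ a ∈ A, ∀ v ∈ K, a v ∈ K) → K = ⊥ ∨ K = ⊤)
    {u v : H} (hu : u ≠ 0) (hv : v ≠ 0) : ∃ a ∈ A, ⟪u, a v⟫_ℂ ≠ 0 := by
  by_contra! h
  let K : Submodule ℂ H := ⨅ a ∈ A, ((innerSL ℂ u).comp a).ker
  have hK : ∀ x, x ∈ K ↔ ∀ a ∈ A, ⟪u, a x⟫_ℂ = 0 := by simp [K]
  have hKclosed : IsClosed (K : Set H) := by
    simp only [K, Submodule.coe_iInf]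
    exact isClosed_iInter fun a =>
      isClosed_iInter fun _ => ContinuousLinearMap.isClosed_ker _
  have hKinv : ∀ b ∈ A, ∀ x ∈ K, b x ∈ K := fun b hb x hx =>
    (hK _).mpr fun a ha => (hK x).mp hx (a * b) (mul_mem ha hb)
  rcases hirr K hKclosed hKinv with hbot | htop
  · exact hv ((Submodule.eq_bot_iff K).mp hbot v ((hK v).mpr (h · ·)))
  · have := (hK u).mp (htop ▸ Submodule.mem_top) 1 (one_mem A)
    exact hu (inner_self_eq_zero.mp this)

variable [CompleteSpace H]

lemma exists_isSelfAdjoint_inner_apply_ne_zero (A : StarSubalgebra ℂ (H →L[ℂ] H))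
    (hirr : ∀ K : Submodule ℂ H, IsClosed (K : Set H) →
      (∀ a ∈ A, ∀ v ∈ K, a v ∈ K) → K = ⊥ ∨ K = ⊤)
    {u v : H} (hu : u ≠ 0) (hv : v ≠ 0) : ∃ a ∈ A, IsSelfAdjoint a ∧ ⟪u, a v⟫_ℂ ≠ 0 := by
  obtain ⟨a, haA, ha⟩ := exists_inner_apply_ne_zero A.toSubalgebra hirr hu hv
  have hmem : ∀ x ∈ A, ∀ r : ℝ, r • x ∈ A := fun x hx r => by
    rw [← Complex.coe_smul]; exact A.smul_mem hx _
  have hre : (ℜ a : H →L[ℂ] H) ∈ A := by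
    rw [realPart_apply_coe]; exact hmem _ (add_mem haA (star_mem haA)) _
  have him : (ℑ a : H →L[ℂ] H) ∈ A := by
    rw [imaginaryPart_apply_coe]
    exact A.smul_mem (hmem _ (sub_mem haA (star_mem haA)) _) _
  by_contra! h
  rw [← realPart_add_I_smul_imaginaryPart a] at ha
  apply ha
  simp [h _ hre (ℜ a).2, h _ him (ℑ a).2]

lemma exists_isSelfAdjoint_mul_eq_self_ne_smul (A : StarSubalgebra ℂ (H →L[ℂ] H))
    (hirr : ∀ K : Submodule ℂ H, IsClosed (K : Set H) →
      (∀ a ∈ A, ∀ v ∈ K, a v ∈ K) → K = ⊥ ∨ K = ⊤)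
    {p : H →L[ℂ] H} (hpA : p ∈ A) (hp : IsStarProjection p)
    (hrank : 2 ≤ Module.rank ℂ (LinearMap.range (p : H →ₗ[ℂ] H))) :
    ∃ b ∈ A, IsSelfAdjoint b ∧ b * p = b ∧ ∀ r : ℝ, b ≠ r • p := by
  obtain ⟨u, hu, v, hv, hu0, hv0, huv⟩ := exists_ne_zero_inner_eq_zero_of_two_le_rank hrank
  obtain ⟨x, hxA, hx, hxuv⟩ := exists_isSelfAdjoint_inner_apply_ne_zero A hirr hu0 hv0
  have hp' : IsIdempotentElem (p : H →ₗ[ℂ] H) :=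
    ContinuousLinearMap.isIdempotentElem_toLinearMap_iff.mpr hp.isIdempotentElem
  have hpu : p u = u := (LinearMap.IsIdempotentElem.mem_range_iff hp').mp hu
  have hpv : p v = v := (LinearMap.IsIdempotentElem.mem_range_iff hp').mp hv
  have hp_symm : ∀ y z : H, ⟪p y, z⟫_ℂ = ⟪y, p z⟫_ℂ :=
    ContinuousLinearMap.isSelfAdjoint_iff_isSymmetric.mp hp.isSelfAdjoint
  refine ⟨p * x * p, mul_mem (mul_mem hpA hxA) hpA, ?_, ?_, fun r hr => hxuv ?_⟩
  · simpa [hp.isSelfAdjoint.star_eq] using hx.conjugate' p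
  · rw [mul_assoc, hp.isIdempotentElem.eq]
  · calc ⟪u, x v⟫_ℂ = ⟪u, (p * x * p) v⟫_ℂ := by
          rw [mul_apply_eq_comp, mul_apply_eq_comp, hpv, ← hp_symm u, hpu]
      _ = 0 := by simp [hr, hpv, huv]

end HilbertSpace

theorem stmt2_general {H : Type} [NormedAddCommGroup H] [InnerProductSpace ℂ H] [CompleteSpace H]
    (A : StarSubalgebra ℂ (H →L[ℂ] H))
    (hirr : ∀ K : Submodule ℂ H, IsClosed (K : Set H) →
      (∀ a ∈ A, ∀ v ∈ K, a v ∈ K) → K = ⊥ ∨ K = ⊤)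
    (hfin : ∀ a ∈ A, 0 ≤ a → (spectrum ℂ a).Finite)
    (p : H →L[ℂ] H) (hpA : p ∈ A) (hp_idem : IsIdempotentElem p) (hp_sa : IsSelfAdjoint p)
    (hrank : 2 ≤ Module.rank ℂ (LinearMap.range (p : H →ₗ[ℂ] H))) :
    ∃ p₀ p₁ : H →L[ℂ] H, p₀ ∈ A ∧ p₁ ∈ A ∧
      IsIdempotentElem p₀ ∧ IsSelfAdjoint p₀ ∧
      IsIdempotentElem p₁ ∧ IsSelfAdjoint p₁ ∧
      p₀ ≠ 0 ∧ p₁ ≠ 0 ∧ p₀ * p₁ = 0 ∧ p₁ * p₀ = 0 ∧ p = p₀ + p₁ := by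
  have hp : IsStarProjection p := ⟨hp_idem, hp_sa⟩
  obtain ⟨b, hbA, hb, hbp, hne⟩ :=
    exists_isSelfAdjoint_mul_eq_self_ne_smul A hirr hpA hp hrank
  obtain ⟨q, hqb, hq, hq0, hqp, hqpq⟩ :=
    exists_proper_subprojection_mem_adjoin (hb.finite_spectrum_real hfin hbA) hb hbp hne
  have hqA : q ∈ A :=
    Algebra.adjoin_le (S := A.toSubalgebra.restrictScalars ℝ) (by simpa using hbA) hqb
  have hpqq : p * q = q := by
    simpa [hp_sa.star_eq, hq.isSelfAdjoint.star_eq] using congr_arg star hqpq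
  have hpq : IsStarProjection (p - q) := hq.sub_of_mul_eq_left hp hqpq
  refine ⟨q, p - q, hqA, sub_mem hpA hqA, hq.isIdempotentElem, hq.isSelfAdjoint,
    hpq.isIdempotentElem, hpq.isSelfAdjoint, hq0, sub_ne_zero.mpr hqp.symm, ?_, ?_,
    (add_sub_cancel q p).symm⟩
  · rw [mul_sub, hqpq, hq.isIdempotentElem.eq, sub_self]
  · rw [sub_mul, hpqq, hq.isIdempotentElem.eq, sub_self]

/-- Let `A` be an irreducible C*-subalgebra of `B(H)` in which every positive
element has finite spectrum. Then every (self-adjoint) projection `p ∈ A` whose image has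
dimension at least 2 decomposes as `p = p₀ + p₁` with `p₀, p₁ ∈ A` nonzero mutually orthogonal
projections. -/
theorem stmt2 {H : Type} [NormedAddCommGroup H] [InnerProductSpace ℂ H] [CompleteSpace H]
    (A : StarSubalgebra ℂ (H →L[ℂ] H)) (hclosed : IsClosed (A : Set (H →L[ℂ] H)))
    (hirr : ∀ K : Submodule ℂ H, IsClosed (K : Set H) →
      (∀ a ∈ A, ∀ v ∈ K, a v ∈ K) → K = ⊥ ∨ K = ⊤)
    (hfin : ∀ a ∈ A, 0 ≤ a → (spectrum ℂ a).Finite)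
    (p : H →L[ℂ] H) (hpA : p ∈ A) (hp_idem : IsIdempotentElem p) (hp_sa : IsSelfAdjoint p)
    (hrank : 2 ≤ Module.rank ℂ (LinearMap.range (p : H →ₗ[ℂ] H))) :
    ∃ p₀ p₁ : H →L[ℂ] H, p₀ ∈ A ∧ p₁ ∈ A ∧
      IsIdempotentElem p₀ ∧ IsSelfAdjoint p₀ ∧
      IsIdempotentElem p₁ ∧ IsSelfAdjoint p₁ ∧
      p₀ ≠ 0 ∧ p₁ ≠ 0 ∧ p₀ * p₁ = 0 ∧ p₁ * p₀ = 0 ∧ p = p₀ + p₁ :=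
  stmt2_general A hirr hfin p hpA hp_idem hp_sa hrank
end

section
/- Let A be a unital C*-algebra and (z_k) a sequence in A such that all partial sums of Σ z_k* z_k are bounded by 1 in norm. Define z_{i+1} := y_{i+1} (1 - Σ_{k=1}^{i} z_k* z_k)^{1/2} for a sequence (y_i) of positive elements with ‖y_i‖ ≤ 1. Then for every n, Σ_{k=1}^{n} z_k* z_k ≤ 1. -/
/-!
Conjugating by `y` with `star y * y ≤ 1` can only decrease `star b * b`, so with `b` the square
root of the remaining defect `1 - ∑_{k ≤ i} (z k)* (z k)` the new term `(z (i+1))* z (i+1)` is at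
most that defect. By induction every partial sum stays below `1`.
-/

lemma CStarAlgebra.star_mul_self_le_one_of_norm_le_one {A : Type*} [CStarAlgebra A]
    [PartialOrder A] [StarOrderedRing A] {a : A} (ha : ‖a‖ ≤ 1) : star a * a ≤ 1 := by
  rw [← CStarAlgebra.norm_le_one_iff_of_nonneg _ (star_mul_self_nonneg a),
    CStarRing.norm_star_mul_self]
  exact mul_le_one₀ ha (norm_nonneg a) ha

lemma star_mul_self_mul_le_of_star_mul_self_le_one {R : Type*} [Semiring R] [PartialOrder R]
    [StarRing R] [StarOrderedRing R] {a : R} (ha : star a * a ≤ 1) (b : R) :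
    star (a * b) * (a * b) ≤ star b * b :=
  calc star (a * b) * (a * b) = star b * (star a * a) * b := by
        simp only [star_mul, mul_assoc]
    _ ≤ star b * 1 * b := star_left_conjugate_le_conjugate ha b
    _ = star b * b := by rw [mul_one]

lemma star_mul_sqrt_self_mul_le {A : Type*} [CStarAlgebra A] [PartialOrder A]
    [StarOrderedRing A] {a c : A} (ha : star a * a ≤ 1) (hc : 0 ≤ c) :
    star (a * CFC.sqrt c) * (a * CFC.sqrt c) ≤ c := by
  have h := star_mul_self_mul_le_of_star_mul_self_le_one ha (CFC.sqrt c)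
  rwa [(CFC.sqrt_nonneg c).star_eq, CFC.sqrt_mul_sqrt_self c hc] at h

theorem stmt4_general {A : Type} [CStarAlgebra A] [PartialOrder A] [StarOrderedRing A]
    (y : ℕ → A) (hy_norm : ∀ i, ‖y i‖ ≤ 1)
    (z : ℕ → A) (hz0 : z 0 = y 0)
    (hz : ∀ i : ℕ,
      z (i + 1) = y (i + 1) * CFC.sqrt (1 - ∑ k ∈ Finset.range (i + 1), star (z k) * z k)) :
    (∀ n : ℕ, 0 ≤ 1 - ∑ k ∈ Finset.range n, star (z k) * z k) ∧
      ∀ n : ℕ, ∑ k ∈ Finset.range n, star (z k) * z k ≤ 1 := by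
  have hy : ∀ i, star (y i) * y i ≤ 1 := fun i =>
    CStarAlgebra.star_mul_self_le_one_of_norm_le_one (hy_norm i)
  have partial_sum_le_one : ∀ n, ∑ k ∈ Finset.range n, star (z k) * z k ≤ 1 := by
    intro n
    induction n with
    | zero => simp
    | succ n ih =>
      rw [Finset.sum_range_succ]
      cases n with
      | zero => simpa [hz0] using hy 0
      | succ m =>
        have h := star_mul_sqrt_self_mul_le (hy (m + 1)) (sub_nonneg.mpr ih)
        rw [← hz m] at h
        exact le_sub_iff_add_le'.mp h
  exact ⟨fun n => sub_nonneg.mpr (partial_sum_le_one n), partial_sum_le_one⟩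

/-- Let `y i` be positive elements of norm at most `1` in a unital
C*-algebra `A`, and define inductively `z 0 = y 0`,
`z (i+1) = y (i+1) * (1 - ∑_{k ≤ i} (z k)* (z k))^{1/2}` (positive square root).
Then all partial sums satisfy `∑_{k < n} (z k)* (z k) ≤ 1`. -/
theorem stmt4 {A : Type} [CStarAlgebra A] [PartialOrder A] [StarOrderedRing A]
    (y : ℕ → A) (hy_pos : ∀ i, 0 ≤ y i) (hy_norm : ∀ i, ‖y i‖ ≤ 1)
    (z : ℕ → A) (hz0 : z 0 = y 0)
    (hz : ∀ i : ℕ,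
      z (i + 1) = y (i + 1) * CFC.sqrt (1 - ∑ k ∈ Finset.range (i + 1), star (z k) * z k)) :
    (∀ n : ℕ, 0 ≤ 1 - ∑ k ∈ Finset.range n, star (z k) * z k) ∧
      ∀ n : ℕ, ∑ k ∈ Finset.range n, star (z k) * z k ≤ 1 :=
  stmt4_general y hy_norm z hz0 hz
end

section
/- Let A be a unital C*-algebra. The dual module H_A' of the standard Hilbert module H_A = l₂(A) can be identified with the set of all sequences f = (f_i) in A such that the partial sums of Σ f_i* f_i are uniformly bounded in norm, with f acting by f(x) = Σ_{i=1}^∞ f_i* x_i, and ‖f‖² = sup_N ‖Σ_{i=1}^N f_i* f_i‖. -/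
/-!
A sequence `f` with `sup_N ‖∑_{i<N} fᵢ* fᵢ‖ = M < ∞` pairs with every `x ∈ H_A`: by the
Cauchy–Schwarz inequality for finite sums in a C*-algebra, `‖∑_{i∈t} fᵢ* xᵢ‖² ≤ M ‖∑_{i∈t} xᵢ* xᵢ‖`,
so `∑ fᵢ* xᵢ` satisfies the Cauchy criterion and has norm at most `√M ‖x‖`. Testing this
functional on the truncations of `f` itself gives `‖∑_{i<N} fᵢ* fᵢ‖ ≤ ‖φ‖ (‖∑_{i<N} fᵢ* fᵢ‖)^{1/2}`,
whence `‖φ‖² = M`. Conversely, a bounded `A`-linear `φ` is determined on finitely supported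
sequences by `fᵢ = φ(eᵢ)*`; the same truncation estimate bounds the partial sums of `f`, and
`φ x` is the limit of `φ` on the truncations of `x` because the tails of `x` tend to `0` in `H_A`.
-/

/-- Membership in the standard Hilbert module `H_A = l₂(A)`: the series `∑ xᵢ* xᵢ`
converges in norm. -/
def MemHA {A : Type} [CStarAlgebra A] (x : ℕ → A) : Prop :=
  Summable fun i => star (x i) * x i

/-- The Hilbert module norm on `H_A`: `‖x‖ = ‖∑ xᵢ* xᵢ‖^{1/2}`. -/
noncomputable def HAnorm {A : Type} [CStarAlgebra A] (x : ℕ → A) : ℝ :=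
  Real.sqrt ‖∑' i, star (x i) * x i‖

/-- A bounded `A`-linear functional on the standard Hilbert module `H_A`. -/
def IsBddAFunctional {A : Type} [CStarAlgebra A] (φ : (ℕ → A) → A) : Prop :=
  (∀ x y : ℕ → A, MemHA x → MemHA y → φ (x + y) = φ x + φ y) ∧
  (∀ (x : ℕ → A) (a : A), MemHA x → φ (fun i => x i * a) = φ x * a) ∧
  (∃ C : ℝ, ∀ x : ℕ → A, MemHA x → ‖φ x‖ ≤ C * HAnorm x)

open Filter Topology

theorem le_sq_of_le_mul_sqrt {t c : ℝ} (ht : 0 ≤ t) (h : t ≤ c * √t) : t ≤ c ^ 2 := by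
  rcases ht.eq_or_lt with rfl | ht
  · positivity
  · have hc : √t ≤ c :=
      le_of_mul_le_mul_right (by rwa [Real.mul_self_sqrt ht.le]) (Real.sqrt_pos.2 ht)
    calc t = √t ^ 2 := (Real.sq_sqrt ht.le).symm
      _ ≤ c ^ 2 := pow_le_pow_left₀ (Real.sqrt_nonneg t) hc 2

section

variable {A : Type} [CStarAlgebra A]

theorem norm_sum_star_mul_le {ι : Type*} [Fintype ι] (a b : ι → A) :
    ‖∑ i, star (a i) * b i‖ ≤ √‖∑ i, star (a i) * a i‖ * √‖∑ i, star (b i) * b i‖ := by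
  let _ := CStarAlgebra.spectralOrder A
  have _ := CStarAlgebra.spectralOrderedRing A
  -- `A` is a Hilbert module over itself with `⟪x, y⟫ = y * star x`, hence the stars.
  let toMod : (ι → A) → WithCStarModule A (ι → A) := fun c =>
    (WithCStarModule.equiv A _).symm (star c)
  rw [mul_comm]
  simpa [WithCStarModule.pi_norm, WithCStarModule.pi_inner, WithCStarModule.inner_def, toMod] using
    CStarModule.norm_inner_le (A := A) (WithCStarModule A (ι → A)) (x := toMod b) (y := toMod a)

theorem Finset.norm_sum_star_mul_le {ι : Type*} (s : Finset ι) (a b : ι → A) :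
    ‖∑ i ∈ s, star (a i) * b i‖ ≤
      √‖∑ i ∈ s, star (a i) * a i‖ * √‖∑ i ∈ s, star (b i) * b i‖ := by
  have h := _root_.norm_sum_star_mul_le (fun i : s => a i) (fun i : s => b i)
  simp only [Finset.sum_coe_sort s (fun i => star (a i) * b i),
    Finset.sum_coe_sort s (fun i => star (a i) * a i),
    Finset.sum_coe_sort s (fun i => star (b i) * b i)] at h
  exact h

theorem norm_sum_star_mul_self_mono (a : ℕ → A) {s t : Finset ℕ} (hst : s ⊆ t) :
    ‖∑ i ∈ s, star (a i) * a i‖ ≤ ‖∑ i ∈ t, star (a i) * a i‖ := by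
  let _ := CStarAlgebra.spectralOrder A
  have _ := CStarAlgebra.spectralOrderedRing A
  exact CStarAlgebra.norm_le_norm_of_nonneg_of_le
    (Finset.sum_nonneg fun i _ => star_mul_self_nonneg (a i))
    (Finset.sum_le_sum_of_subset_of_nonneg hst fun i _ _ => star_mul_self_nonneg (a i))

theorem norm_sum_star_mul_self_le {f : ℕ → A} {C : ℝ}
    (hf : ∀ N, ‖∑ i ∈ Finset.range N, star (f i) * f i‖ ≤ C) (s : Finset ℕ) :
    ‖∑ i ∈ s, star (f i) * f i‖ ≤ C := by
  obtain ⟨N, hN⟩ := s.exists_nat_subset_range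
  exact (norm_sum_star_mul_self_mono f hN).trans (hf N)

theorem MemHA.sqrt_norm_sum_le {x : ℕ → A} (hx : MemHA x) (s : Finset ℕ) :
    √‖∑ i ∈ s, star (x i) * x i‖ ≤ HAnorm x := by
  refine Real.sqrt_le_sqrt (ge_of_tendsto hx.hasSum.norm ?_)
  filter_upwards [eventually_ge_atTop s] with t hst
  exact norm_sum_star_mul_self_mono x hst

theorem MemHA.summable_star_mul {f x : ℕ → A} {C : ℝ}
    (hf : ∀ N, ‖∑ i ∈ Finset.range N, star (f i) * f i‖ ≤ C) (hx : MemHA x) :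
    Summable fun i => star (f i) * x i := by
  refine summable_iff_vanishing_norm.2 fun ε hε => ?_
  set δ := ε / (√C + 1)
  have hδ : 0 < δ := by positivity
  obtain ⟨s, hs⟩ := summable_iff_vanishing_norm.1 hx (δ ^ 2) (by positivity)
  refine ⟨s, fun t ht => ?_⟩
  have htail : √‖∑ i ∈ t, star (x i) * x i‖ ≤ δ :=
    (Real.sqrt_le_left hδ.le).2 (hs t ht).le
  calc ‖∑ i ∈ t, star (f i) * x i‖
      ≤ √C * δ := (t.norm_sum_star_mul_le f x).trans <| mul_le_mul
        (Real.sqrt_le_sqrt (norm_sum_star_mul_self_le hf t)) htail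
        (Real.sqrt_nonneg _) (Real.sqrt_nonneg _)
    _ < ε := by
      rw [mul_div_left_comm]
      exact mul_lt_of_lt_one_right hε ((div_lt_one (by positivity)).2 (lt_add_one _))

theorem norm_tsum_star_mul_le {f x : ℕ → A} {C : ℝ}
    (hf : ∀ N, ‖∑ i ∈ Finset.range N, star (f i) * f i‖ ≤ C) (hx : MemHA x) :
    ‖∑' i, star (f i) * x i‖ ≤ √C * HAnorm x :=
  le_of_tendsto' (hx.summable_star_mul hf).hasSum.norm fun s =>
    (s.norm_sum_star_mul_le f x).trans <| mul_le_mul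
      (Real.sqrt_le_sqrt (norm_sum_star_mul_self_le hf s)) (hx.sqrt_norm_sum_le s)
      (Real.sqrt_nonneg _) (Real.sqrt_nonneg _)

theorem isBddAFunctional_tsum_star_mul {f : ℕ → A} {C : ℝ}
    (hf : ∀ N, ‖∑ i ∈ Finset.range N, star (f i) * f i‖ ≤ C) :
    IsBddAFunctional fun x => ∑' i, star (f i) * x i := by
  refine ⟨fun x y hx hy => ?_, fun x a hx => ?_, √C, fun x hx => norm_tsum_star_mul_le hf hx⟩
  · simp only [Pi.add_apply, mul_add]
    exact (hx.summable_star_mul hf).tsum_add (hy.summable_star_mul hf)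
  · simp only [← mul_assoc]
    exact (hx.summable_star_mul hf).tsum_mul_right a

theorem memHA_zero : MemHA (0 : ℕ → A) := by
  simp [MemHA]

theorem HAnorm_nonneg (x : ℕ → A) : 0 ≤ HAnorm x :=
  Real.sqrt_nonneg _

theorem MemHA.smul {x : ℕ → A} (hx : MemHA x) (r : ℝ) : MemHA (r • x) := by
  simpa [MemHA, smul_mul_smul_comm, smul_smul] using hx.const_smul (r * r)

theorem HAnorm_smul (r : ℝ) (x : ℕ → A) : HAnorm (r • x) = |r| * HAnorm x := by
  simp only [HAnorm, Pi.smul_apply, star_smul, star_trivial, smul_mul_smul_comm, tsum_const_smul'',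
    norm_smul, Real.norm_eq_abs, ← sq, abs_sq]
  rw [Real.sqrt_mul (sq_nonneg r), Real.sqrt_sq_eq_abs]

theorem IsBddAFunctional.map_smul {φ : (ℕ → A) → A} (hφ : IsBddAFunctional φ) {x : ℕ → A}
    (hx : MemHA x) (r : ℝ) : φ (r • x) = r • φ x := by
  have h := hφ.2.1 x (algebraMap ℝ A r) hx
  simp only [← Algebra.commutes, ← Algebra.smul_def] at h
  exact h

noncomputable def dualNorm (φ : (ℕ → A) → A) : ℝ :=
  sSup {c : ℝ | ∃ x : ℕ → A, MemHA x ∧ HAnorm x ≤ 1 ∧ c = ‖φ x‖}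

theorem dualNorm_le {φ : (ℕ → A) → A} {c : ℝ} (hc : 0 ≤ c)
    (h : ∀ x, MemHA x → ‖φ x‖ ≤ c * HAnorm x) : dualNorm φ ≤ c := by
  refine csSup_le ⟨_, 0, memHA_zero, by simp [HAnorm], rfl⟩ ?_
  rintro _ ⟨x, hx, hx1, rfl⟩
  exact (h x hx).trans (mul_le_of_le_one_right hc hx1)

theorem IsBddAFunctional.bddAbove {φ : (ℕ → A) → A} (hφ : IsBddAFunctional φ) :
    BddAbove {c : ℝ | ∃ x : ℕ → A, MemHA x ∧ HAnorm x ≤ 1 ∧ c = ‖φ x‖} := by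
  obtain ⟨C, hC⟩ := hφ.2.2
  refine ⟨|C|, ?_⟩
  rintro _ ⟨x, hx, hx1, rfl⟩
  calc ‖φ x‖ ≤ C * HAnorm x := hC x hx
    _ ≤ |C| * HAnorm x := mul_le_mul_of_nonneg_right (le_abs_self C) (HAnorm_nonneg x)
    _ ≤ |C| := mul_le_of_le_one_right (abs_nonneg C) hx1

theorem IsBddAFunctional.dualNorm_nonneg {φ : (ℕ → A) → A} (hφ : IsBddAFunctional φ) :
    0 ≤ dualNorm φ :=
  (norm_nonneg _).trans (le_csSup hφ.bddAbove ⟨0, memHA_zero, by simp [HAnorm], rfl⟩)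

theorem IsBddAFunctional.norm_le_dualNorm_mul {φ : (ℕ → A) → A} (hφ : IsBddAFunctional φ)
    {x : ℕ → A} (hx : MemHA x) : ‖φ x‖ ≤ dualNorm φ * HAnorm x := by
  obtain ⟨C, hC⟩ := hφ.2.2
  rcases (HAnorm_nonneg x).eq_or_lt with h0 | hpos
  · have h := hC x hx
    rw [← h0, mul_zero] at h ⊢
    exact h
  · have hunit : HAnorm ((HAnorm x)⁻¹ • x) = 1 := by
      rw [HAnorm_smul, abs_of_pos (inv_pos.2 hpos), inv_mul_cancel₀ hpos.ne']
    have hle : ‖φ ((HAnorm x)⁻¹ • x)‖ ≤ dualNorm φ :=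
      le_csSup hφ.bddAbove ⟨_, hx.smul _, hunit.le, rfl⟩
    rw [hφ.map_smul hx, norm_smul, Real.norm_eq_abs, abs_of_pos (inv_pos.2 hpos),
      inv_mul_le_iff₀ hpos] at hle
    linarith

theorem star_indicator_mul_self (s : Set ℕ) (x : ℕ → A) :
    (fun i => star (s.indicator x i) * s.indicator x i) =
      s.indicator fun i => star (x i) * x i := by
  ext i
  by_cases hi : i ∈ s <;> simp [hi]

theorem MemHA.indicator {x : ℕ → A} (hx : MemHA x) (s : Set ℕ) : MemHA (s.indicator x) := by
  rw [MemHA, star_indicator_mul_self]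
  exact Summable.indicator hx s

theorem memHA_indicator_range (x : ℕ → A) (N : ℕ) :
    MemHA ((Finset.range N : Set ℕ).indicator x) := by
  rw [MemHA, star_indicator_mul_self]
  exact summable_of_ne_finset_zero (s := Finset.range N) fun i hi => Set.indicator_of_notMem hi _

theorem tsum_star_mul_indicator_range (f x : ℕ → A) (N : ℕ) :
    ∑' i, star (f i) * (Finset.range N : Set ℕ).indicator x i =
      ∑ i ∈ Finset.range N, star (f i) * x i := by
  rw [tsum_congr fun i => (Set.indicator_mul_right _ (fun i => star (f i)) x).symm,
    ← tsum_subtype, Finset.tsum_subtype' _ fun i => star (f i) * x i]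

theorem HAnorm_indicator_range (x : ℕ → A) (N : ℕ) :
    HAnorm ((Finset.range N : Set ℕ).indicator x) =
      √‖∑ i ∈ Finset.range N, star (x i) * x i‖ := by
  rw [HAnorm, star_indicator_mul_self, ← tsum_subtype,
    Finset.tsum_subtype' _ fun i => star (x i) * x i]

theorem tendsto_HAnorm_indicator_compl_range (x : ℕ → A) :
    Tendsto (fun N => HAnorm ((Finset.range N : Set ℕ)ᶜ.indicator x)) atTop (𝓝 0) := by
  simp_rw [HAnorm, star_indicator_mul_self, ← tsum_subtype]
  have h := ((tendsto_tsum_compl_atTop_zero fun i => star (x i) * x i).comp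
    tendsto_finset_range).norm.sqrt
  rwa [norm_zero, Real.sqrt_zero] at h

theorem dualNorm_tsum_star_mul_sq {f : ℕ → A} {C : ℝ}
    (hf : ∀ N, ‖∑ i ∈ Finset.range N, star (f i) * f i‖ ≤ C) :
    dualNorm (fun x => ∑' i, star (f i) * x i) ^ 2 =
      sSup {c : ℝ | ∃ N : ℕ, c = ‖∑ i ∈ Finset.range N, star (f i) * f i‖} := by
  set M := sSup {c : ℝ | ∃ N : ℕ, c = ‖∑ i ∈ Finset.range N, star (f i) * f i‖}
  have hM : ∀ N, ‖∑ i ∈ Finset.range N, star (f i) * f i‖ ≤ M := fun N =>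
    le_csSup ⟨C, by rintro _ ⟨N, rfl⟩; exact hf N⟩ ⟨N, rfl⟩
  have hφ := isBddAFunctional_tsum_star_mul hM
  refine le_antisymm ?_ (csSup_le ⟨_, 0, rfl⟩ ?_)
  · calc _ ≤ √M ^ 2 := pow_le_pow_left₀ hφ.dualNorm_nonneg
          (dualNorm_le (Real.sqrt_nonneg M) fun x hx => norm_tsum_star_mul_le hM hx) 2
      _ = M := Real.sq_sqrt ((norm_nonneg _).trans (hM 0))
  · rintro _ ⟨N, rfl⟩
    refine le_sq_of_le_mul_sqrt (norm_nonneg _) ?_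
    have h := hφ.norm_le_dualNorm_mul (memHA_indicator_range f N)
    rwa [tsum_star_mul_indicator_range, HAnorm_indicator_range] at h

theorem memHA_single (i : ℕ) (a : A) : MemHA (Pi.single i a) :=
  (hasSum_single i fun j hj => by simp [hj]).summable

theorem IsBddAFunctional.map_zero {φ : (ℕ → A) → A} (hφ : IsBddAFunctional φ) : φ 0 = 0 := by
  simpa using hφ.1 0 0 memHA_zero memHA_zero

theorem IsBddAFunctional.apply_single {φ : (ℕ → A) → A} (hφ : IsBddAFunctional φ) (i : ℕ)
    (a : A) : φ (Pi.single i a) = φ (Pi.single i 1) * a := by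
  rw [← hφ.2.1 _ a (memHA_single i 1)]
  congr 1
  ext j
  by_cases hj : j = i <;> simp [hj]

noncomputable def representingSeq (φ : (ℕ → A) → A) (i : ℕ) : A :=
  star (φ (Pi.single i 1))

theorem indicator_range_succ (x : ℕ → A) (N : ℕ) :
    (Finset.range (N + 1) : Set ℕ).indicator x =
      (Finset.range N : Set ℕ).indicator x + Pi.single N (x N) := by
  ext i
  simp only [Set.indicator_apply, Finset.coe_range, Set.mem_Iio, Pi.add_apply, Pi.single_apply]
  split_ifs <;> first | omega | simp_all

theorem IsBddAFunctional.apply_indicator_range {φ : (ℕ → A) → A} (hφ : IsBddAFunctional φ)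
    (x : ℕ → A) (N : ℕ) :
    φ ((Finset.range N : Set ℕ).indicator x) =
      ∑ i ∈ Finset.range N, star (representingSeq φ i) * x i := by
  induction N with
  | zero =>
    rw [Finset.range_zero, Finset.coe_empty, Set.indicator_empty, Finset.sum_empty]
    exact hφ.map_zero
  | succ N ih =>
    rw [indicator_range_succ, hφ.1 _ _ (memHA_indicator_range x N) (memHA_single N (x N)), ih,
      hφ.apply_single, Finset.sum_range_succ, representingSeq, star_star]

theorem IsBddAFunctional.norm_sum_representingSeq_le {φ : (ℕ → A) → A}
    (hφ : IsBddAFunctional φ) :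
    ∃ C : ℝ, ∀ N : ℕ,
      ‖∑ i ∈ Finset.range N, star (representingSeq φ i) * representingSeq φ i‖ ≤ C := by
  obtain ⟨C, hC⟩ := hφ.2.2
  refine ⟨C ^ 2, fun N => le_sq_of_le_mul_sqrt (norm_nonneg _) ?_⟩
  have h := hC _ (memHA_indicator_range (representingSeq φ) N)
  rwa [hφ.apply_indicator_range, HAnorm_indicator_range] at h

theorem IsBddAFunctional.hasSum_star_representingSeq_mul {φ : (ℕ → A) → A}
    (hφ : IsBddAFunctional φ) {x : ℕ → A} (hx : MemHA x) :
    HasSum (fun i => star (representingSeq φ i) * x i) (φ x) := by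
  obtain ⟨C, hC⟩ := hφ.2.2
  obtain ⟨C', hC'⟩ := hφ.norm_sum_representingSeq_le
  rw [(hx.summable_star_mul hC').hasSum_iff_tendsto_nat]
  have hsplit : ∀ N, ∑ i ∈ Finset.range N, star (representingSeq φ i) * x i =
      φ x - φ ((Finset.range N : Set ℕ)ᶜ.indicator x) := fun N => by
    rw [← hφ.apply_indicator_range, eq_sub_iff_add_eq, ← hφ.1 _ _ (memHA_indicator_range x N)
      (hx.indicator _), Set.indicator_self_add_compl]
  have htail : Tendsto (fun N => φ ((Finset.range N : Set ℕ)ᶜ.indicator x)) atTop (𝓝 0) :=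
    squeeze_zero_norm (fun N => hC _ (hx.indicator _))
      (by simpa using (tendsto_HAnorm_indicator_compl_range x).const_mul C)
  simpa [hsplit] using htail.const_sub (φ x)

end

/-- For a unital C*-algebra `A`, the dual module `H_A'` is identified with
the set of sequences `f = (fᵢ)` in `A` with uniformly norm-bounded partial sums of
`∑ fᵢ* fᵢ`: every such sequence defines a bounded `A`-linear functional
`x ↦ ∑ fᵢ* xᵢ`, its norm satisfies `‖f‖² = sup_N ‖∑_{i<N} fᵢ* fᵢ‖`, and conversely every
bounded `A`-linear functional on `H_A` arises this way. -/
theorem stmt9 {A : Type} [CStarAlgebra A] :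
    (∀ f : ℕ → A, (∃ C : ℝ, ∀ N : ℕ, ‖∑ i ∈ Finset.range N, star (f i) * f i‖ ≤ C) →
      ∃ φ : (ℕ → A) → A, IsBddAFunctional φ ∧
        (∀ x : ℕ → A, MemHA x → HasSum (fun i => star (f i) * x i) (φ x)) ∧
        (sSup {c : ℝ | ∃ x : ℕ → A, MemHA x ∧ HAnorm x ≤ 1 ∧ c = ‖φ x‖}) ^ 2
          = sSup {c : ℝ | ∃ N : ℕ, c = ‖∑ i ∈ Finset.range N, star (f i) * f i‖}) ∧
    (∀ φ : (ℕ → A) → A, IsBddAFunctional φ →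
      ∃ f : ℕ → A, (∃ C : ℝ, ∀ N : ℕ, ‖∑ i ∈ Finset.range N, star (f i) * f i‖ ≤ C) ∧
        ∀ x : ℕ → A, MemHA x → HasSum (fun i => star (f i) * x i) (φ x)) := by
  refine ⟨fun f ⟨C, hf⟩ => ?_, fun φ hφ => ?_⟩
  · exact ⟨fun x => ∑' i, star (f i) * x i, isBddAFunctional_tsum_star_mul hf,
      fun x hx => (hx.summable_star_mul hf).hasSum, dualNorm_tsum_star_mul_sq hf⟩
  · exact ⟨representingSeq φ, hφ.norm_sum_representingSeq_le,
      fun x hx => hφ.hasSum_star_representingSeq_mul hx⟩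
end

section
/- Let T be a topological space satisfying the T₀ separation axiom, and let S be a separated point of T (i.e., S and any point not in the closure relation with S can be separated by disjoint open sets; in particular any two distinct separated points have disjoint neighborhoods). Given a sequence (S_i) of pairwise distinct separated points of T, there exist a subsequence (S_{i(j)}) and open neighborhoods V_j of S_{i(j)} such that V_j contains no other point of the subsequence. -/
/-!
Pull the topology of `T` back along `S`. The hypothesis makes `ℕ` with this induced topology a
Hausdorff space, so it contains a sequence of pairwise disjoint infinite open sets `S ⁻¹' V n`.
Picking `φ n ∈ S ⁻¹' V n` increasingly gives the subsequence, and `V n` isolates `S (φ n)`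
because the sets `S ⁻¹' V k` are pairwise disjoint.
-/

open Filter Function Set Topology

lemma t2Space_induced_of_pairwise_separated {α X : Type*} [TopologicalSpace X] (f : α → X)
    (hsep : Pairwise fun a b => ∃ U V : Set X,
      IsOpen U ∧ IsOpen V ∧ f a ∈ U ∧ f b ∈ V ∧ Disjoint U V) :
    @T2Space α (.induced f ‹_›) :=
  letI := TopologicalSpace.induced f ‹_›
  ⟨fun a b hab => by
    obtain ⟨U, V, hU, hV, haU, hbV, hUV⟩ := hsep hab
    exact ⟨f ⁻¹' U, f ⁻¹' V, isOpen_induced hU, isOpen_induced hV, haU, hbV, hUV.preimage f⟩⟩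

lemma exists_seq_isOpen_infinite_preimage_pairwise_disjoint {X : Type*} [TopologicalSpace X]
    (S : ℕ → X) (hsep : Pairwise fun i j => ∃ U V : Set X,
      IsOpen U ∧ IsOpen V ∧ S i ∈ U ∧ S j ∈ V ∧ Disjoint U V) :
    ∃ V : ℕ → Set X, (∀ n, IsOpen (V n)) ∧ (∀ n, (S ⁻¹' V n).Infinite) ∧
      Pairwise (Disjoint on fun n => S ⁻¹' V n) := by
  -- This local instance takes precedence over the discrete topology of `ℕ`.
  let _ : TopologicalSpace ℕ := .induced S ‹_›
  have := t2Space_induced_of_pairwise_separated S hsep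
  obtain ⟨U, hUinf, hUo, hUdisj⟩ := exists_seq_infinite_isOpen_pairwise_disjoint ℕ
  choose V hVo hVU using fun n => isOpen_induced_iff.mp (hUo n)
  refine ⟨V, hVo, fun n => ?_, fun _ _ hmn => ?_⟩
  · simpa only [hVU] using hUinf n
  · simpa only [onFun, hVU] using hUdisj hmn

lemma exists_strictMono_forall_mem_of_infinite (U : ℕ → Set ℕ) (hU : ∀ n, (U n).Infinite) :
    ∃ φ : ℕ → ℕ, StrictMono φ ∧ ∀ n, φ n ∈ U n :=
  extraction_forall_of_frequently fun n => Nat.frequently_atTop_iff_infinite.mpr (hU n)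

theorem stmt13_general {T : Type} [TopologicalSpace T]
    (S : ℕ → T)
    (hsep : ∀ i j : ℕ, i ≠ j → ∃ U V : Set T,
      IsOpen U ∧ IsOpen V ∧ S i ∈ U ∧ S j ∈ V ∧ Disjoint U V) :
    ∃ φ : ℕ → ℕ, StrictMono φ ∧ ∃ V : ℕ → Set T,
      ∀ j : ℕ, IsOpen (V j) ∧ S (φ j) ∈ V j ∧ ∀ k : ℕ, k ≠ j → S (φ k) ∉ V j := by
  obtain ⟨V, hVo, hVinf, hVdisj⟩ :=
    exists_seq_isOpen_infinite_preimage_pairwise_disjoint S fun i j => hsep i j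
  obtain ⟨φ, hφ, hφV⟩ := exists_strictMono_forall_mem_of_infinite _ hVinf
  exact ⟨φ, hφ, V, fun j => ⟨hVo j, hφV j, fun k hkj hkV =>
    Set.disjoint_left.mp (hVdisj hkj) (hφV k) hkV⟩⟩

/-- Let `T` be a `T₀` topological space and `(S i)` a sequence of pairwise
distinct separated points (in particular any two distinct points of the sequence admit
disjoint open neighborhoods). Then there are a subsequence `S (φ j)` and open neighborhoods
`V j` of `S (φ j)` containing no other point of the subsequence. -/
theorem stmt13 {T : Type} [TopologicalSpace T] [T0Space T]
    (S : ℕ → T) (hinj : Function.Injective S)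
    (hsep : ∀ i j : ℕ, i ≠ j → ∃ U V : Set T,
      IsOpen U ∧ IsOpen V ∧ S i ∈ U ∧ S j ∈ V ∧ Disjoint U V) :
    ∃ φ : ℕ → ℕ, StrictMono φ ∧ ∃ V : ℕ → Set T,
      ∀ j : ℕ, IsOpen (V j) ∧ S (φ j) ∈ V j ∧ ∀ k : ℕ, k ≠ j → S (φ k) ∉ V j :=
  stmt13_general S hsep
end

section
/- Let A be the unitization of K(H) for an infinite-dimensional separable Hilbert space H. Then for any sequence (u_i) in A with 1 ≥ ‖u_i‖ ≥ C > 0, there exist elements b_i ∈ A of norm at most 1 such that all partial sums of Σ b_i* b_i are bounded by 1 and ‖u_i b_i‖ > C/2 for each i. -/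
open scoped InnerProduct ComplexConjugate

local notation "⟪" x ", " y "⟫" => @inner ℂ _ _ x y

-- rank-one operators are compact
lemma rankOne_isCompactOperator {H : Type} [NormedAddCommGroup H] [InnerProductSpace ℂ H]
    (e x : H) : IsCompactOperator ⇑((innerSL ℂ e).smulRight x) := by
  rw [isCompactOperator_iff_exists_mem_nhds_image_subset_compact]
  refine ⟨Metric.ball 0 1, Metric.ball_mem_nhds 0 one_pos,
    (fun c : ℂ => c • x) '' Metric.closedBall 0 ‖e‖,
    ((isCompact_closedBall 0 ‖e‖).image (by continuity)), ?_⟩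
  rintro _ ⟨z, hz, rfl⟩
  refine ⟨⟪e, z⟫, ?_, rfl⟩
  simp only [Metric.mem_closedBall, dist_zero_right]
  calc ‖⟪e, z⟫‖ ≤ ‖e‖ * ‖z‖ := norm_inner_le_norm e z
    _ ≤ ‖e‖ * 1 := by
        gcongr
        exact le_of_lt (by simpa [dist_zero_right] using hz)
    _ = ‖e‖ := mul_one _

/-- Let `A = K(H)~` be the unitization of the compact operators on an
infinite-dimensional separable Hilbert space `H`, realized as the C*-subalgebra
`{k + c·1 : k compact, c ∈ ℂ}` of `B(H)`. Then for any sequence `(uᵢ)` in `A` with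
`1 ≥ ‖uᵢ‖ ≥ C > 0` there are `bᵢ ∈ A` of norm at most `1` such that all partial sums of
`∑ bᵢ* bᵢ` are bounded by `1` and `‖uᵢ bᵢ‖ > C/2` for each `i`. -/
theorem stmt18 {H : Type} [NormedAddCommGroup H] [InnerProductSpace ℂ H] [CompleteSpace H]
    [TopologicalSpace.SeparableSpace H] (hinf : ¬ FiniteDimensional ℂ H)
    (A : StarSubalgebra ℂ (H →L[ℂ] H))
    (hA : ∀ T : H →L[ℂ] H, T ∈ A ↔ ∃ c : ℂ, IsCompactOperator ⇑(T - c • (1 : H →L[ℂ] H)))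
    (C : ℝ) (hC : 0 < C)
    (u : ℕ → (H →L[ℂ] H)) (hu_mem : ∀ i, u i ∈ A)
    (hu_le : ∀ i, ‖u i‖ ≤ 1) (hu_ge : ∀ i, C ≤ ‖u i‖) :
    ∃ b : ℕ → (H →L[ℂ] H), (∀ i, b i ∈ A) ∧ (∀ i, ‖b i‖ ≤ 1) ∧
      (∀ n : ℕ, ‖∑ i ∈ Finset.range n, star (b i) * b i‖ ≤ 1) ∧
      (∀ i, ‖u i * b i‖ > C / 2) := by
  -- obtain an orthonormal ℕ-indexed family
  obtain ⟨w, bw, hbw⟩ := exists_hilbertBasis ℂ H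
  have hwinf : w.Infinite := by
    by_contra hfin
    rw [Set.not_infinite] at hfin
    haveI := hfin.fintype
    apply hinf
    have hd : (Submodule.span ℂ (Set.range (⇑bw))).topologicalClosure = ⊤ :=
      bw.dense_span
    have hfd : FiniteDimensional ℂ (Submodule.span ℂ (Set.range (⇑bw))) := by
      apply FiniteDimensional.span_of_finite
      exact (Set.finite_range _)
    have hcl : (Submodule.span ℂ (Set.range (⇑bw))).topologicalClosure
        = Submodule.span ℂ (Set.range (⇑bw)) :=
      (Submodule.closed_of_finiteDimensional _).submodule_topologicalClosure_eq
    rw [hcl] at hd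
    rw [hd] at hfd
    exact Module.Finite.equiv Submodule.topEquiv
  let f := hwinf.natEmbedding
  let e : ℕ → H := fun i => (f i : H)
  have he : Orthonormal ℂ e := by
    have := bw.orthonormal
    rw [hbw] at this
    exact this.comp f f.injective
  -- choose unit vectors x i with ‖u i (x i)‖ > C/2
  have hx : ∀ i, ∃ x : H, ‖x‖ = 1 ∧ C / 2 < ‖u i x‖ := by
    intro i
    have h1 : ¬ (‖u i‖ ≤ C / 2) := by
      have := hu_ge i; linarith
    rw [ContinuousLinearMap.opNorm_le_iff (by linarith)] at h1
    push_neg at h1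
    obtain ⟨z, hz⟩ := h1
    have hz0 : z ≠ 0 := by
      rintro rfl; simp at hz
    refine ⟨‖z‖⁻¹ • z, ?_, ?_⟩
    · simp [norm_smul, inv_mul_cancel₀ (norm_ne_zero_iff.mpr hz0)]
    · have hzn : (0:ℝ) < ‖z‖ := norm_pos_iff.mpr hz0
      rw [RCLike.real_smul_eq_coe_smul (K := ℂ), map_smul, norm_smul]
      simp only [RCLike.norm_ofReal, abs_inv, abs_norm]
      rw [lt_inv_mul_iff₀ hzn]
      linarith [hz]
  choose x hx1 hx2 using hx
  -- define b i
  refine ⟨fun i => (innerSL ℂ (e i)).smulRight (x i), ?_, ?_, ?_, ?_⟩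
  · intro i
    rw [hA]
    exact ⟨0, by simpa using rankOne_isCompactOperator (e i) (x i)⟩
  · intro i
    rw [ContinuousLinearMap.norm_smulRight_apply, innerSL_apply_norm, he.1 i, hx1 i, one_mul]
  · intro n
    refine ContinuousLinearMap.opNorm_le_bound _ zero_le_one fun z => ?_
    rw [one_mul]
    have hterm : ∀ i, (star ((innerSL ℂ (e i)).smulRight (x i)) *
        ((innerSL ℂ (e i)).smulRight (x i))) z = ⟪e i, z⟫ • e i := by
      intro i
      have : (star ((innerSL ℂ (e i)).smulRight (x i)) *
          ((innerSL ℂ (e i)).smulRight (x i))) z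
          = ContinuousLinearMap.adjoint ((innerSL ℂ (e i)).smulRight (x i))
              (((innerSL ℂ (e i)).smulRight (x i)) z) := by
        rw [ContinuousLinearMap.star_eq_adjoint]; rfl
      rw [this]
      refine ext_inner_left ℂ fun v => ?_
      rw [ContinuousLinearMap.adjoint_inner_right]
      simp only [ContinuousLinearMap.smulRight_apply, innerSL_apply_apply, inner_smul_left,
        inner_smul_right]
      have hxx : ⟪x i, x i⟫ = 1 := by
        rw [inner_self_eq_norm_sq_to_K, hx1 i]; norm_num
      rw [hxx]
      ring_nf
      rw [← inner_conj_symm (e i) v]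
      rw [starRingEnd_self_apply]
    have hsum : (∑ i ∈ Finset.range n, star ((innerSL ℂ (e i)).smulRight (x i)) *
        ((innerSL ℂ (e i)).smulRight (x i))) z = ∑ i ∈ Finset.range n, ⟪e i, z⟫ • e i := by
      rw [ContinuousLinearMap.sum_apply]
      exact Finset.sum_congr rfl fun i _ => hterm i
    rw [hsum]
    have hb := he.sum_inner_products_le (s := Finset.range n) z
    have hnorm : ‖∑ i ∈ Finset.range n, ⟪e i, z⟫ • e i‖ ^ 2
        = ∑ i ∈ Finset.range n, ‖⟪e i, z⟫‖ ^ 2 := by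
      rw [← inner_self_eq_norm_sq (𝕜 := ℂ), he.inner_sum]
      rw [← RCLike.ofReal_re (K := ℂ) (∑ i ∈ Finset.range n, ‖⟪e i, z⟫‖ ^ 2)]
      congr 1
      push_cast
      refine Finset.sum_congr rfl fun i _ => ?_
      rw [RCLike.conj_mul]
    have h2 : ‖∑ i ∈ Finset.range n, ⟪e i, z⟫ • e i‖ ^ 2 ≤ ‖z‖ ^ 2 := by
      rw [hnorm]; exact hb
    nlinarith [norm_nonneg (∑ i ∈ Finset.range n, ⟪e i, z⟫ • e i), norm_nonneg z, h2]
  · intro i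
    have key : (u i * (innerSL ℂ (e i)).smulRight (x i)) (e i) = u i (x i) := by
      simp only [ContinuousLinearMap.mul_apply, ContinuousLinearMap.smulRight_apply,
        innerSL_apply_apply]
      have hee : ⟪e i, e i⟫ = 1 := by
        rw [inner_self_eq_norm_sq_to_K, he.1 i]; norm_num
      rw [hee]; simp
    have hle : ‖(u i * (innerSL ℂ (e i)).smulRight (x i)) (e i)‖
        ≤ ‖u i * (innerSL ℂ (e i)).smulRight (x i)‖ * ‖e i‖ :=
      ContinuousLinearMap.le_opNorm _ _
    rw [key, he.1 i, mul_one] at hle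
    exact lt_of_lt_of_le (hx2 i) hle
end
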